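/- Let X, Y, X̂ be random variables forming a Markov chain X → Y → X̂, where X is uniformly distributed on a finite set 𝒳, Y takes values in a finite set 𝒴, and X̂ takes values in a subset of 𝒳. Then P(X̂ = X) ≤ |𝒴| / |𝒳|. -/
import Mathlib


/-- Guessing lemma: if `p` is the joint distribution of a Markov chain
`X → Y → X̂` on finite sets, with `X` uniform on `𝒳` and `X̂` valued in `𝒳`,
then `P(X̂ = X) ≤ |𝒴|/|𝒳|`. -/
theorem guessing_lemma
    {𝒳 𝒴 : Type*} [Fintype 𝒳] [Fintype 𝒴] [Nonempty 𝒳] [Nonempty 𝒴]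
    (p : 𝒳 × 𝒴 × 𝒳 → ℝ)
    (hp_nonneg : ∀ t, 0 ≤ p t)
    (hp_sum : ∑ t : 𝒳 × 𝒴 × 𝒳, p t = 1)
    (h_uniform : ∀ x : 𝒳, ∑ y : 𝒴, ∑ z : 𝒳, p (x, y, z) = 1 / Fintype.card 𝒳)
    (h_markov : ∃ q : 𝒴 → 𝒳 → ℝ, (∀ y z, 0 ≤ q y z) ∧ (∀ y, ∑ z : 𝒳, q y z = 1) ∧
      ∀ x y z, p (x, y, z) = (∑ z' : 𝒳, p (x, y, z')) * q y z) :
    ∑ x : 𝒳, ∑ y : 𝒴, p (x, y, x) ≤ (Fintype.card 𝒴 : ℝ) / Fintype.card 𝒳 := by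
  obtain ⟨q, hq0, hq1, hM⟩ := h_markov
  have ha : ∀ x y, (∑ z' : 𝒳, p (x, y, z')) ≤ 1 / Fintype.card 𝒳 := by
    intro x y
    rw [← h_uniform x]
    exact Finset.single_le_sum (f := fun y => ∑ z' : 𝒳, p (x, y, z'))
      (fun y _ => Finset.sum_nonneg fun z _ => hp_nonneg _) (Finset.mem_univ y)
  calc ∑ x : 𝒳, ∑ y : 𝒴, p (x, y, x)
      ≤ ∑ x : 𝒳, ∑ y : 𝒴, (1 / Fintype.card 𝒳) * q y x := by
        apply Finset.sum_le_sum; intro x _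
        apply Finset.sum_le_sum; intro y _
        rw [hM x y x]
        exact mul_le_mul_of_nonneg_right (ha x y) (hq0 y x)
    _ = (Fintype.card 𝒴 : ℝ) / Fintype.card 𝒳 := by
        rw [Finset.sum_comm]
        simp only [← Finset.mul_sum, hq1]
        simp [mul_comm, div_eq_mul_inv]
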